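/- If non-negative integers n1 ≥ n2 ≥ 0 and a1 ≥ a2 ≥ a3 ≥ 0 with n1 > 100 satisfy B_{n1} + B_{n2} = 2^{a1} + 2^{a2} + 2^{a3}, then |α^{n2}·2^{−a2}·(1 + α^{n1−n2})/(4√2·(2^{a1−a2} + 1)) − 1| < 1.1 · 2^{a3−a1}, where α = 3 + 2√2. -/
import Mathlib

set_option maxRecDepth 40000
set_option maxHeartbeats 1000000

/-- The balancing numbers: `B 0 = 0`, `B 1 = 1`, `B (n+2) = 6 * B (n+1) - B n`. -/
def balancing : ℕ → ℤ
  | 0 => 0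
  | 1 => 1
  | n + 2 => 6 * balancing (n + 1) - balancing n

lemma balancing_add_two (n : ℕ) : balancing (n+2) = 6 * balancing (n+1) - balancing n := rfl

lemma per_gen (q : ℤ) (p : ℕ) (h0 : q ∣ balancing p - balancing 0)
    (h1 : q ∣ balancing (p+1) - balancing 1) :
    ∀ n, q ∣ balancing (n + p) - balancing n := by
  intro n
  induction n using Nat.twoStepInduction with
  | zero => simpa using h0
  | one =>
    have e : 1 + p = p + 1 := by omega
    rw [e]; simpa using h1
  | more n ih1 ih2 =>
    have e : balancing (n + 2 + p) = 6 * balancing (n + 1 + p) - balancing (n + p) := by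
      have h : n + 2 + p = (n + p) + 2 := by omega
      have h' : n + p + 1 = n + 1 + p := by omega
      rw [h, balancing_add_two, h']
    rw [e, balancing_add_two]
    obtain ⟨c, hc⟩ := ih1
    obtain ⟨d, hd⟩ := ih2
    exact ⟨6*d - c, by linarith⟩

lemma red_gen (q : ℤ) (p : ℕ) (h0 : q ∣ balancing p - balancing 0)
    (h1 : q ∣ balancing (p+1) - balancing 1) :
    ∀ n, balancing n ≡ balancing (n % p) [ZMOD q] := by
  intro n
  suffices h : q ∣ balancing n - balancing (n % p) by
    obtain ⟨c, hc⟩ := h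
    exact Int.modEq_iff_dvd.mpr ⟨-c, by linarith⟩
  obtain ⟨k, hk⟩ : ∃ k, n = p * k + n % p := ⟨n / p, by have := Nat.div_add_mod n p; omega⟩
  rw [hk]; clear hk
  induction k with
  | zero => simp
  | succ k ih =>
    have e : p * (k+1) + n % p = (p * k + n % p) + p := by ring
    rw [e]
    have h2 := per_gen q p h0 h1 (p * k + n % p)
    have e2 : ((p * k + n % p) + p) % p = (p * k + n % p) % p := Nat.add_mod_right _ _
    rw [e2]
    have := dvd_add h2 ih
    simpa using this

lemma pow2_mod16_257 (a : ℕ) : (2:ℤ)^a ≡ 2^(a % 16) [ZMOD 257] := by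
  have e : (2:ℤ)^a = ((2:ℤ)^16)^(a/16) * 2^(a%16) := by
    rw [← pow_mul, ← pow_add]
    congr 1
    omega
  calc (2:ℤ)^a = ((2:ℤ)^16)^(a/16) * 2^(a%16) := e
    _ ≡ 1^(a/16) * 2^(a%16) [ZMOD 257] := ((Int.ModEq.pow _ (by decide)).mul_right _)
    _ = 2^(a%16) := by rw [one_pow, one_mul]

lemma pow2_mod8_17 (a : ℕ) : (2:ℤ)^a ≡ 2^(a % 8) [ZMOD 17] := by
  have e : (2:ℤ)^a = ((2:ℤ)^8)^(a/8) * 2^(a%8) := by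
    rw [← pow_mul, ← pow_add]
    congr 1
    omega
  calc (2:ℤ)^a = ((2:ℤ)^8)^(a/8) * 2^(a%8) := e
    _ ≡ 1^(a/8) * 2^(a%8) [ZMOD 17] := ((Int.ModEq.pow _ (by decide)).mul_right _)
    _ = 2^(a%8) := by rw [one_pow, one_mul]

lemma no_three_bits (n a1 a2 : ℕ) (h6 : 6 ≤ a1) (ha : a2 ≤ a1)
    (heq : balancing n = 2 ^ a1 + 2 ^ a2 + 1) : False := by
  have h64 := red_gen 64 64 (by decide) (by decide) n
  have h257 := red_gen 257 64 (by decide) (by decide) n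
  have h17 := red_gen 17 8 (by decide) (by decide) n
  have hdvd64 : (64:ℤ) ∣ 2 ^ a1 := ⟨2^(a1-6), by rw [show (64:ℤ) = 2^6 by norm_num, ← pow_add]; congr 1; omega⟩
  have hr : n % 64 < 64 := Nat.mod_lt _ (by norm_num)
  rcases le_or_gt a2 5 with hs | hb
  · -- small a2: balancing (n%64) ≡ 2^a2 + 1 [ZMOD 64]
    have K64 : balancing (n % 64) ≡ 2 ^ a2 + 1 [ZMOD 64] := by
      have h0 : (2:ℤ)^a1 ≡ 0 [ZMOD 64] := (Int.modEq_zero_iff_dvd).mpr hdvd64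
      calc balancing (n % 64) ≡ balancing n [ZMOD 64] := h64.symm
        _ = 2^a1 + 2^a2 + 1 := heq
        _ ≡ 0 + 2^a2 + 1 [ZMOD 64] := ((h0.add_right _).add_right _)
        _ = 2^a2 + 1 := by ring
    -- helper to finish a scenario given pinned r0 and target d with 2^(a1%16) ≡ d impossible
    have main : ∀ (r0 : ℕ), n % 64 = r0 →
        ∀ (d : ℤ), balancing r0 - 1 - 2^a2 ≡ d [ZMOD 257] →
        (∀ m : Fin 16, ¬ ((2:ℤ)^m.val ≡ d [ZMOD 257])) → False := by
      intro r0 hr0 d hd hno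
      have hBn : balancing n ≡ balancing r0 [ZMOD 257] := hr0 ▸ h257
      have h2a1 : (2:ℤ)^a1 ≡ d [ZMOD 257] := by
        have : (2:ℤ)^a1 = balancing n - 1 - 2^a2 := by rw [heq]; ring
        rw [this]
        exact ((hBn.sub_right _).sub_right _).trans hd
      have := (pow2_mod16_257 a1).symm.trans h2a1
      exact hno ⟨a1 % 16, Nat.mod_lt _ (by norm_num)⟩ this
    interval_cases a2
    · -- a2 = 0 : K = 2, r0 = 22
      have hpin : ∀ r : Fin 64, balancing r.val ≡ 2^(0:ℕ) + 1 [ZMOD 64] → r.val = 22 := by decide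
      exact main 22 (hpin ⟨n % 64, hr⟩ K64) 143 (by decide) (by decide)
    · have hpin : ∀ r : Fin 64, balancing r.val ≡ 2^(1:ℕ) + 1 [ZMOD 64] → r.val = 35 := by decide
      exact main 35 (hpin ⟨n % 64, hr⟩ K64) 219 (by decide) (by decide)
    · have hpin : ∀ r : Fin 64, balancing r.val ≡ 2^(2:ℕ) + 1 [ZMOD 64] → r.val = 37 := by decide
      exact main 37 (hpin ⟨n % 64, hr⟩ K64) 91 (by decide) (by decide)
    · have hpin : ∀ r : Fin 64, balancing r.val ≡ 2^(3:ℕ) + 1 [ZMOD 64] → r.val = 9 := by decide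
      exact main 9 (hpin ⟨n % 64, hr⟩ K64) 230 (by decide) (by decide)
    · have hpin : ∀ r : Fin 64, balancing r.val ≡ 2^(4:ℕ) + 1 [ZMOD 64] → r.val = 17 := by decide
      exact main 17 (hpin ⟨n % 64, hr⟩ K64) 34 (by decide) (by decide)
    · have hpin : ∀ r : Fin 64, balancing r.val ≡ 2^(5:ℕ) + 1 [ZMOD 64] → r.val = 33 := by decide
      exact main 33 (hpin ⟨n % 64, hr⟩ K64) 223 (by decide) (by decide)
  · -- a2 ≥ 6
    have hdvd64' : (64:ℤ) ∣ 2 ^ a2 := ⟨2^(a2-6), by rw [show (64:ℤ) = 2^6 by norm_num, ← pow_add]; congr 1; omega⟩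
    have K64 : balancing (n % 64) ≡ 1 [ZMOD 64] := by
      have h0 : (2:ℤ)^a1 ≡ 0 [ZMOD 64] := (Int.modEq_zero_iff_dvd).mpr hdvd64
      have h0' : (2:ℤ)^a2 ≡ 0 [ZMOD 64] := (Int.modEq_zero_iff_dvd).mpr hdvd64'
      calc balancing (n % 64) ≡ balancing n [ZMOD 64] := h64.symm
        _ = 2^a1 + 2^a2 + 1 := heq
        _ ≡ 0 + 0 + 1 [ZMOD 64] := (((h0.add h0')).add_right _)
        _ = 1 := by ring
    have hpin : ∀ r : Fin 64, balancing r.val ≡ 1 [ZMOD 64] → r.val = 1 := by decide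
    have hr1 : n % 64 = 1 := hpin ⟨n % 64, hr⟩ K64
    have hr8 : n % 8 = 1 := by
      have : n % 64 % 8 = n % 8 := Nat.mod_mod_of_dvd n (by norm_num)
      omega
    -- mod 17 and mod 257 : 2^a1 + 2^a2 ≡ 0
    set t := a1 - a2 with ht
    have hsplit : (2:ℤ)^a1 = 2^a2 * 2^t := by rw [← pow_add]; congr 1; omega
    have key : ∀ (q : ℤ), Prime q → ¬ (q ∣ 2) → balancing n ≡ 1 [ZMOD q] → q ∣ 2^t + 1 := by
      intro q hq hq2 hB
      have h0 : (2:ℤ)^a2 * (2^t + 1) ≡ 0 [ZMOD q] := by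
        have e : (2:ℤ)^a2 * (2^t + 1) = (2^a1 + 2^a2 + 1) - 1 := by rw [hsplit]; ring
        rw [e, ← heq]
        simpa using hB.sub_right 1
      have hdvd : q ∣ (2:ℤ)^a2 * (2^t + 1) := (Int.modEq_zero_iff_dvd).mp h0
      rcases (hq.dvd_mul).mp hdvd with h | h
      · exact absurd (hq.dvd_of_dvd_pow h) hq2
      · exact h
    have hB17 : balancing n ≡ 1 [ZMOD 17] := by
      have : balancing (n % 8) = 1 := by rw [hr8]; rfl
      simpa [this] using h17
    have hB257 : balancing n ≡ 1 [ZMOD 257] := by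
      have : balancing (n % 64) = 1 := by rw [hr1]; rfl
      simpa [this] using h257
    have k17 : (17:ℤ) ∣ 2^t + 1 := key 17 (by norm_num) (by norm_num) hB17
    have k257 : (257:ℤ) ∣ 2^t + 1 := key 257 (by norm_num) (by norm_num) hB257
    have m17 : (2:ℤ)^(t % 8) ≡ 16 [ZMOD 17] := by
      have h1 : (2:ℤ)^t ≡ 16 [ZMOD 17] := by
        have : (17:ℤ) ∣ 16 - 2^t := by
          obtain ⟨c, hc⟩ := k17
          exact ⟨1 - c, by linarith⟩
        exact Int.modEq_iff_dvd.mpr this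
      exact (pow2_mod8_17 t).symm.trans h1
    have m257 : (2:ℤ)^(t % 16) ≡ 256 [ZMOD 257] := by
      have h1 : (2:ℤ)^t ≡ 256 [ZMOD 257] := by
        have : (257:ℤ) ∣ 256 - 2^t := by
          obtain ⟨c, hc⟩ := k257
          exact ⟨1 - c, by linarith⟩
        exact Int.modEq_iff_dvd.mpr this
      exact (pow2_mod16_257 t).symm.trans h1
    have e17 : ∀ m : Fin 8, (2:ℤ)^m.val ≡ 16 [ZMOD 17] → m.val = 4 := by decide
    have e257 : ∀ m : Fin 16, (2:ℤ)^m.val ≡ 256 [ZMOD 257] → m.val = 8 := by decide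
    have h4 : t % 8 = 4 := e17 ⟨t % 8, Nat.mod_lt _ (by norm_num)⟩ m17
    have h8 : t % 16 = 8 := e257 ⟨t % 16, Nat.mod_lt _ (by norm_num)⟩ m257
    omega


lemma balancing_step_nonneg : ∀ n, balancing n ≤ balancing (n+1) ∧ 0 ≤ balancing n := by
  intro n
  induction n using Nat.twoStepInduction with
  | zero => refine ⟨?_, le_refl 0⟩; norm_num [balancing]
  | one => constructor <;> norm_num [balancing, balancing_add_two]
  | more n ih1 ih2 =>
    obtain ⟨h1, h2⟩ := ih1
    obtain ⟨h3, h4⟩ := ih2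
    have e2 : balancing (n+2) = 6 * balancing (n+1) - balancing n := rfl
    have e3 : balancing (n+3) = 6 * balancing (n+2) - balancing (n+1) := rfl
    constructor
    · rw [show n+2+1 = n+3 from rfl, e3, e2]; linarith
    · rw [e2]; linarith

lemma balancing_mono : Monotone balancing :=
  monotone_nat_of_le_succ (fun n => (balancing_step_nonneg n).1)

lemma binet (n : ℕ) : (balancing n : ℝ) * (4 * Real.sqrt 2) =
    (3 + 2*Real.sqrt 2)^n - (3 - 2*Real.sqrt 2)^n := by
  have hs : Real.sqrt 2 ^ 2 = 2 := Real.sq_sqrt (by norm_num)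
  have key : ∀ x : ℝ, x^2 = 6*x - 1 → ∀ m : ℕ, x^(m+2) = 6*x^(m+1) - x^m := by
    intro x hx m
    have e : x^(m+2) = x^m * x^2 := by ring
    rw [e, hx]; ring
  have hα : (3 + 2*Real.sqrt 2)^2 = 6*(3 + 2*Real.sqrt 2) - 1 := by ring_nf; nlinarith [hs]
  have hβ : (3 - 2*Real.sqrt 2)^2 = 6*(3 - 2*Real.sqrt 2) - 1 := by ring_nf; nlinarith [hs]
  induction n using Nat.twoStepInduction with
  | zero => norm_num [balancing]
  | one => norm_num [balancing]; ring
  | more n ih1 ih2 =>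
    have e : balancing (n+2) = 6 * balancing (n+1) - balancing n := rfl
    rw [e, key _ hα n, key _ hβ n]
    push_cast
    ring_nf
    ring_nf at ih1 ih2
    linarith


theorem balancing_linear_form_bound_1B (n1 n2 a1 a2 a3 : ℕ)
    (hn : n2 ≤ n1) (ha12 : a2 ≤ a1) (ha23 : a3 ≤ a2) (hn1 : 100 < n1)
    (heq : balancing n1 + balancing n2 = 2 ^ a1 + 2 ^ a2 + 2 ^ a3) :
    |(3 + 2 * Real.sqrt 2) ^ n2 * (2 : ℝ) ^ (-(a2 : ℤ)) *
        ((1 + (3 + 2 * Real.sqrt 2) ^ ((n1 : ℤ) - n2)) /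
          (4 * Real.sqrt 2 * ((2 : ℝ) ^ ((a1 : ℤ) - a2) + 1))) - 1| <
      1.1 * (2 : ℝ) ^ ((a3 : ℤ) - a1) := by
  set s := Real.sqrt 2 with hs_def
  have hs : s ^ 2 = 2 := Real.sq_sqrt (by norm_num)
  have hs_pos : 0 < s := Real.sqrt_pos.mpr (by norm_num)
  have hs_lt : s < 3/2 := by nlinarith
  have hs_gt : 7/5 < s := by nlinarith
  have hs_gt2 : 141/100 < s := by nlinarith
  set α : ℝ := 3 + 2*s with hα_def
  set β : ℝ := 3 - 2*s with hβ_def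
  have hα_pos : 0 < α := by simp only [hα_def]; linarith
  have hα_ne : α ≠ 0 := ne_of_gt hα_pos
  have hβ_pos : 0 < β := by simp only [hβ_def]; linarith
  have hβ_lt1 : β < 1 := by simp only [hβ_def]; linarith
  have h2a1_pos : (0:ℝ) < 2^a1 := by positivity
  have h2a2_pos : (0:ℝ) < 2^a2 := by positivity
  have h2a3_pos : (0:ℝ) < 2^a3 := by positivity
  -- zpow rewrites
  have hz1 : (2:ℝ)^(-(a2:ℤ)) = ((2:ℝ)^(a2:ℕ))⁻¹ := by
    rw [zpow_neg, zpow_natCast]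
  have hz2 : (2:ℝ)^((a1:ℤ)-(a2:ℤ)) = 2^a1 / 2^a2 := by
    rw [zpow_sub₀ (by norm_num : (2:ℝ) ≠ 0), zpow_natCast, zpow_natCast]
  have hz3 : α^((n1:ℤ)-(n2:ℤ)) = α^n1 / α^n2 := by
    rw [zpow_sub₀ hα_ne, zpow_natCast, zpow_natCast]
  have hz4 : (2:ℝ)^((a3:ℤ)-(a1:ℤ)) = 2^a3 / 2^a1 := by
    rw [zpow_sub₀ (by norm_num : (2:ℝ) ≠ 0), zpow_natCast, zpow_natCast]
  rw [hz1, hz2, hz3, hz4]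
  -- expression simplification
  set D : ℝ := 4*s*(2^a1 + 2^a2) with hD_def
  have hD_pos : 0 < D := by simp only [hD_def]; positivity
  have hE : α^n2 * ((2:ℝ)^a2)⁻¹ * ((1 + α^n1/α^n2) / (4*s*(2^a1/2^a2 + 1))) =
      (α^n1 + α^n2) / D := by
    have h1 : α^n2 ≠ 0 := pow_ne_zero _ hα_ne
    have h2 : ((2:ℝ)^a2) ≠ 0 := ne_of_gt h2a2_pos
    have h3 : s ≠ 0 := ne_of_gt hs_pos
    have h4 : (2:ℝ)^a1 + 2^a2 ≠ 0 := by positivity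
    simp only [hD_def]
    field_simp
    ring
  rw [hE]
  -- Binet consequences
  have heqR : (balancing n1 : ℝ) + (balancing n2 : ℝ) = 2^a1 + 2^a2 + 2^a3 := by
    exact_mod_cast congrArg (fun z : ℤ => (z : ℝ)) heq
  have hkey : (α^n1 + α^n2) - D = 4*s*2^a3 + β^n1 + β^n2 := by
    have b1 := binet n1
    have b2 := binet n2
    rw [← hs_def, ← hα_def, ← hβ_def] at b1 b2
    simp only [hD_def]
    nlinarith [b1, b2, heqR, hs_pos]
  -- rewrite |X - 1| with X = (α^n1+α^n2)/D
  have hfrac : (α^n1 + α^n2) / D - 1 = (4*s*2^a3 + β^n1 + β^n2) / D := by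
    rw [div_sub_one (ne_of_gt hD_pos), hkey]
  rw [hfrac]
  have hβn1 : (0:ℝ) < β^n1 := pow_pos hβ_pos _
  have hβn2 : (0:ℝ) < β^n2 := pow_pos hβ_pos _
  have habs : |(4*s*2^a3 + β^n1 + β^n2) / D| = (4*s*2^a3 + β^n1 + β^n2) / D := by
    apply abs_of_nonneg
    apply div_nonneg _ (le_of_lt hD_pos)
    positivity
  rw [habs]
  -- the key bound on the beta part
  have hβsq : β^n1 ≤ β^2 := pow_le_pow_of_le_one (le_of_lt hβ_pos) (le_of_lt hβ_lt1) (by omega)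
  have hc : β^n1 + β^n2 < (2/5)*s*2^a3 := by
    rcases Nat.eq_zero_or_pos n2 with h0 | hpos
    · rcases Nat.eq_zero_or_pos a3 with h30 | h3pos
      · -- hard case: contradiction with heq
        exfalso
        subst h0; subst h30
        have hB0 : balancing 0 = 0 := rfl
        have heq' : balancing n1 = 2^a1 + 2^a2 + 1 := by
          rw [hB0] at heq; simpa using heq
        have hBmono : (40391:ℤ) ≤ balancing n1 := by
          have h7 : balancing 7 = 40391 := by decide
          calc (40391:ℤ) = balancing 7 := h7.symm
            _ ≤ balancing n1 := balancing_mono (by omega)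
        have ha16 : 6 ≤ a1 := by
          by_contra hlt
          push_neg at hlt
          have e1 : (2:ℤ)^a1 ≤ 2^5 := pow_le_pow_right₀ (by norm_num) (by omega)
          have e2 : (2:ℤ)^a2 ≤ 2^5 := pow_le_pow_right₀ (by norm_num) (by omega)
          norm_num at e1 e2
          omega
        exact no_three_bits n1 a1 a2 ha16 ha12 heq'
      · -- n2 = 0, a3 ≥ 1
        subst h0
        have h2a3 : (2:ℝ)^1 ≤ 2^a3 := pow_le_pow_right₀ (by norm_num) h3pos
        have hz : β^(0:ℕ) = 1 := pow_zero β
        rw [hz]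
        have hβ2 : β^2 = 17 - 12*s := by
          simp only [hβ_def]
          linear_combination (4:ℝ) * hs
        have hge : (2/5)*s*2 ≤ (2/5)*s*2^a3 := by
          have h' : (0:ℝ) ≤ (2/5)*s*(2^a3 - 2) := by
            apply mul_nonneg (by positivity)
            norm_num at h2a3
            linarith
          linarith
        linarith [hβsq]
    · -- n2 ≥ 1
      have hβn2' : β^n2 ≤ β := by
        calc β^n2 ≤ β^1 := pow_le_pow_of_le_one (le_of_lt hβ_pos) (le_of_lt hβ_lt1) hpos
          _ = β := pow_one β
      have h2a3 : (1:ℝ) ≤ 2^a3 := one_le_pow₀ (by norm_num)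
      have hβ2 : β^2 = 17 - 12*s := by
        simp only [hβ_def]
        linear_combination (4:ℝ) * hs
      have hge : (2/5)*s*1 ≤ (2/5)*s*2^a3 := by
        have h' : (0:ℝ) ≤ (2/5)*s*(2^a3 - 1) := by
          apply mul_nonneg (by positivity)
          linarith
        linarith
      have hβval : β = 3 - 2*s := hβ_def
      linarith [hβsq]
  -- final cross-multiplied comparison
  rw [show (1.1 : ℝ) * (2^a3 / 2^a1) = (1.1 * 2^a3) / 2^a1 by ring]
  rw [div_lt_div_iff₀ hD_pos h2a1_pos]
  have hterm : (0:ℝ) < 1.1 * 2^a3 * (4*s*2^a2) := by positivity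
  have hmul := mul_lt_mul_of_pos_right hc h2a1_pos
  simp only [hD_def]
  nlinarith [hmul, hterm]
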